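/- arXiv:1805.05061 — 3 statements merged into one kernel-verified Lean document; each statement's English description precedes it below -/
import Mathlib

section
/- There exists a continuous map q from the space of non-decreasing continuous surjection-like directed paths α : [0,1] → [0,1] with α(0) = 0 and α(1) = 1 (with compact-open topology) to the open interval (0,1) such that 0 < α(q(α)) < 1 for every such α. -/
noncomputable section

abbrev PSp := {α : C(unitInterval, unitInterval) // Monotone ⇑α ∧ α 0 = 0 ∧ α 1 = 1}

def Ffun (α : C(unitInterval, unitInterval)) (t : unitInterval) : ℝ := (t : ℝ) + (α t : ℝ)

lemma Ffun_strictMono (α : PSp) : StrictMono (Ffun α.1) := by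
  have h1 : StrictMono (fun t : unitInterval => (t : ℝ)) := fun a b h => by exact_mod_cast h
  have h2 : Monotone (fun t : unitInterval => ((α.1 t : unitInterval) : ℝ)) :=
    fun a b h => by exact_mod_cast α.2.1 h
  exact h1.add_monotone h2

lemma Ffun_continuous (α : PSp) : Continuous (Ffun α.1) :=
  continuous_subtype_val.add (continuous_subtype_val.comp α.1.continuous)

lemma exists_root (α : PSp) : ∃ t, Ffun α.1 t = 1 := by
  have h0 : Ffun α.1 0 = 0 := by simp [Ffun, α.2.2.1]
  have h1 : Ffun α.1 1 = 2 := by simp [Ffun, α.2.2.2]; norm_num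
  have h := intermediate_value_univ (0 : unitInterval) 1 (Ffun_continuous α)
  have h2 : (1:ℝ) ∈ Set.range (Ffun α.1) := h (by rw [h0, h1]; constructor <;> norm_num)
  exact h2

def qfun (α : PSp) : unitInterval := (exists_root α).choose

lemma qfun_spec (α : PSp) : (qfun α : ℝ) + (α.1 (qfun α) : ℝ) = 1 := (exists_root α).choose_spec

lemma qfun_pos (α : PSp) : 0 < (qfun α : ℝ) := by
  rcases lt_or_eq_of_le (qfun α).2.1 with h | h
  · exact h
  · exfalso
    have hq : qfun α = 0 := by ext; exact h.symm
    have := qfun_spec α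
    rw [hq, α.2.2.1] at this
    norm_num at this

lemma qfun_lt_one (α : PSp) : (qfun α : ℝ) < 1 := by
  rcases lt_or_eq_of_le (qfun α).2.2 with h | h
  · exact h
  · exfalso
    have hq : qfun α = 1 := by ext; exact h
    have := qfun_spec α
    rw [hq, α.2.2.2] at this
    norm_num at this

lemma qfun_continuous : Continuous qfun := by
  rw [Metric.continuous_iff]
  intro α ε hε
  set t₀ := qfun α with ht₀
  have ht0 : 0 < (t₀:ℝ) := qfun_pos α
  have ht1 : (t₀:ℝ) < 1 := qfun_lt_one α
  set ε' : ℝ := min ε (min (t₀:ℝ) (1 - (t₀:ℝ))) / 2 with hε'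
  have hε'pos : 0 < ε' := by
    apply div_pos _ two_pos
    exact lt_min hε (lt_min ht0 (by linarith))
  have hε'ε : ε' < ε := by
    have : ε' ≤ ε / 2 := by
      apply div_le_div_of_nonneg_right (min_le_left _ _) (by norm_num : (0:ℝ) ≤ 2)
    linarith
  have hε't0 : ε' < (t₀:ℝ) := by
    have : ε' ≤ (t₀:ℝ) / 2 := by
      apply div_le_div_of_nonneg_right ((min_le_right _ _).trans (min_le_left _ _)) (by norm_num : (0:ℝ) ≤ 2)
    linarith
  have hε't1 : (t₀:ℝ) + ε' < 1 := by
    have : ε' ≤ (1 - (t₀:ℝ)) / 2 := by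
      apply div_le_div_of_nonneg_right ((min_le_right _ _).trans (min_le_right _ _)) (by norm_num : (0:ℝ) ≤ 2)
    linarith
  set a : unitInterval := ⟨(t₀:ℝ) - ε', by constructor <;> linarith⟩ with ha
  set b : unitInterval := ⟨(t₀:ℝ) + ε', by constructor <;> linarith [(t₀ : ℝ), hε'pos]⟩ with hb
  have haF : Ffun α.1 a < 1 := by
    have hlt : a < t₀ := by
      rw [← Subtype.coe_lt_coe]; simp [ha]; linarith
    have := Ffun_strictMono α hlt
    rw [show Ffun α.1 t₀ = 1 from qfun_spec α] at this
    exact this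
  have hbF : 1 < Ffun α.1 b := by
    have hlt : t₀ < b := by
      rw [← Subtype.coe_lt_coe]; simp [hb]; linarith
    have := Ffun_strictMono α hlt
    rw [show Ffun α.1 t₀ = 1 from qfun_spec α] at this
    exact this
  refine ⟨min (1 - Ffun α.1 a) (Ffun α.1 b - 1), lt_min (by linarith) (by linarith), ?_⟩
  intro β hβ
  have key : ∀ t, |(β.1 t : ℝ) - (α.1 t : ℝ)| < min (1 - Ffun α.1 a) (Ffun α.1 b - 1) := by
    intro t
    have h1 : dist (β.1 t) (α.1 t) ≤ dist β.1 α.1 := ContinuousMap.dist_apply_le_dist t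
    have h2 : dist β.1 α.1 = dist β α := (Subtype.dist_eq β α).symm
    calc |(β.1 t : ℝ) - (α.1 t : ℝ)| = dist (β.1 t) (α.1 t) := by
            rw [Subtype.dist_eq, Real.dist_eq]
      _ ≤ dist β α := by rw [← h2]; exact h1
      _ < _ := hβ
  set s := qfun β with hs
  have hsa : a < s := by
    by_contra h
    push_neg at h
    have h1 : Ffun β.1 s ≤ Ffun β.1 a := (Ffun_strictMono β).monotone h
    have h2 : Ffun β.1 a < 1 := by
      have := key a
      have habs : (β.1 a : ℝ) - (α.1 a : ℝ) < 1 - Ffun α.1 a :=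
        lt_of_le_of_lt (le_abs_self _) (lt_of_lt_of_le (key a) (min_le_left _ _))
      simp only [Ffun] at *
      linarith
    rw [show Ffun β.1 s = 1 from qfun_spec β] at h1
    linarith
  have hsb : s < b := by
    by_contra h
    push_neg at h
    have h1 : Ffun β.1 b ≤ Ffun β.1 s := (Ffun_strictMono β).monotone h
    have h2 : 1 < Ffun β.1 b := by
      have habs : (α.1 b : ℝ) - (β.1 b : ℝ) < Ffun α.1 b - 1 :=
        lt_of_le_of_lt (le_abs_self _) (lt_of_lt_of_le (by rw [abs_sub_comm]; exact key b) (min_le_right _ _))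
      simp only [Ffun] at *
      linarith
    rw [show Ffun β.1 s = 1 from qfun_spec β] at h1
    linarith
  rw [Subtype.dist_eq, Real.dist_eq, abs_sub_lt_iff]
  rw [← Subtype.coe_lt_coe] at hsa hsb
  simp only [ha, hb] at hsa hsb
  constructor <;> [skip; skip] <;> · simp only [← hs, ← ht₀] at *; linarith

/-- There is a continuous map `q` on the space of non-decreasing continuous
maps `α : [0,1] → [0,1]` with `α 0 = 0` and `α 1 = 1` (compact-open topology) taking
values in `(0,1)` and such that `0 < α (q α) < 1` for every such `α`. -/
theorem exists_continuous_section :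
    ∃ q : C({α : C(unitInterval, unitInterval) // Monotone ⇑α ∧ α 0 = 0 ∧ α 1 = 1},
        unitInterval),
      ∀ α, (0 < ((q α : unitInterval) : ℝ) ∧ ((q α : unitInterval) : ℝ) < 1) ∧
        (0 < ((α.val (q α) : unitInterval) : ℝ) ∧ ((α.val (q α) : unitInterval) : ℝ) < 1) := by
  refine ⟨⟨qfun, qfun_continuous⟩, fun α => ?_⟩
  simp only [ContinuousMap.coe_mk]
  have hspec := qfun_spec α
  have h0 := qfun_pos α
  have h1 := qfun_lt_one α
  exact ⟨⟨h0, h1⟩, ⟨by linarith, by linarith⟩⟩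
end
end

section
/- Let X be a d-space with no loops. Define the directed suspension ΣX = (X × [0,1]) / (X × {0}), (X × {1}), collapsing the bottom to a point 𝟎 and the top to a point 𝟏, with the quotient d-structure. Then ΣX has no loops. -/
def Path.compMono {X : Type*} [TopologicalSpace X] {x y : X} (γ : Path x y)
    (f : C(unitInterval, unitInterval)) : Path (γ (f 0)) (γ (f 1)) where
  toFun := fun t => γ (f t)
  continuous_toFun := γ.continuous.comp f.continuous
  source' := rfl
  target' := rfl

structure DStruct (X : Type*) [TopologicalSpace X] where
  IsDPath : ∀ ⦃x y : X⦄, Path x y → Prop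
  refl : ∀ x : X, IsDPath (Path.refl x)
  trans : ∀ ⦃x y z : X⦄ (α : Path x y) (β : Path y z),
    IsDPath α → IsDPath β → IsDPath (α.trans β)
  reparam : ∀ ⦃x y : X⦄ (γ : Path x y) (f : C(unitInterval, unitInterval)),
    IsDPath γ → Monotone ⇑f → IsDPath (γ.compMono f)

def DStruct.le {X : Type*} [TopologicalSpace X] (D : DStruct X) (x y : X) : Prop :=
  ∃ γ : Path x y, D.IsDPath γ

def DStruct.NoLoops {X : Type*} [TopologicalSpace X] (D : DStruct X) : Prop :=
  ∀ (x : X) (γ : Path x x), D.IsDPath γ → ∀ t, γ t = x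

/-- The setoid collapsing the bottom `X × {0}` and the top `X × {1}` of the cylinder. -/
def suspSetoid (X : Type*) : Setoid (X × unitInterval) where
  r p q := p = q ∨ (p.2 = 0 ∧ q.2 = 0) ∨ (p.2 = 1 ∧ q.2 = 1)
  iseqv := by
    constructor
    · exact fun p => Or.inl rfl
    · rintro p q (rfl | ⟨h1, h2⟩ | ⟨h1, h2⟩)
      · exact Or.inl rfl
      · exact Or.inr (Or.inl ⟨h2, h1⟩)
      · exact Or.inr (Or.inr ⟨h2, h1⟩)
    · rintro p q r (rfl | ⟨h1, h2⟩ | ⟨h1, h2⟩) (rfl | ⟨h3, h4⟩ | ⟨h3, h4⟩)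
      · exact Or.inl rfl
      · exact Or.inr (Or.inl ⟨h3, h4⟩)
      · exact Or.inr (Or.inr ⟨h3, h4⟩)
      · exact Or.inr (Or.inl ⟨h1, h2⟩)
      · exact Or.inr (Or.inl ⟨h1, h4⟩)
      · exact absurd (h2 ▸ h3) (by norm_num [Subtype.ext_iff])
      · exact Or.inr (Or.inr ⟨h1, h2⟩)
      · exact absurd (h2 ▸ h3) (by norm_num [Subtype.ext_iff])
      · exact Or.inr (Or.inr ⟨h1, h4⟩)

/-- The directed suspension of a space, as a topological space. -/
def Susp (X : Type*) [TopologicalSpace X] : Type _ := Quotient (suspSetoid X)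

instance (X : Type*) [TopologicalSpace X] : TopologicalSpace (Susp X) :=
  instTopologicalSpaceQuotient

/-- The projection to the suspension of a pair of paths in `X` and in `[0,1]`. -/
def projPath {X : Type*} [TopologicalSpace X] {x y : X} {s t : unitInterval}
    (γ : Path x y) (f : Path s t) :
    Path (Quotient.mk (suspSetoid X) (x, s)) (Quotient.mk (suspSetoid X) (y, t)) where
  toFun u := Quotient.mk (suspSetoid X) (γ u, f u)
  continuous_toFun := continuous_quotient_mk'.comp (γ.continuous.prodMk f.continuous)
  source' := by simp
  target' := by simp

/-- The quotient d-structure on the directed suspension: the smallest family of paths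
containing all projections of directed product paths and closed under concatenation and
monotone reparametrization. -/
inductive SuspD {X : Type*} [TopologicalSpace X] (DX : DStruct X) :
    ∀ ⦃p q : Susp X⦄, Path p q → Prop
  | proj {x y : X} {s t : unitInterval} (γ : Path x y) (f : Path s t)
      (hγ : DX.IsDPath γ) (hf : Monotone ⇑f) : SuspD DX (projPath γ f)
  | trans {p q r : Susp X} (α : Path p q) (β : Path q r) :
      SuspD DX α → SuspD DX β → SuspD DX (α.trans β)
  | reparam {p q : Susp X} (γ : Path p q) (f : C(unitInterval, unitInterval)) :
      SuspD DX γ → Monotone ⇑f → SuspD DX (γ.compMono f)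

/-!
Order the suspension lexicographically: first by height, and within a level `0 < s < 1` by the
reachability preorder of `X` (the levels `0` and `1` are single points). Along a directed path of
the suspension the height is non-decreasing, and while it stays constant the `X`-coordinate moves
along a directed path of `X`; so every directed path is monotone for this preorder. Since `X` has
no loops, reachability in `X` is antisymmetric, hence so is the lexicographic preorder, and a
directed loop `γ` at `p` is squeezed: `p = γ 0 ≤ γ t ≤ γ 1 = p`.
-/

open unitInterval

theorem Path.rel_trans_apply_of_le {X : Type*} [TopologicalSpace X] {r : X → X → Prop}
    [IsTrans X r] {x y z : X} {α : Path x y} {β : Path y z}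
    (hα : ∀ ⦃a b : I⦄, a ≤ b → r (α a) (α b)) (hβ : ∀ ⦃a b : I⦄, a ≤ b → r (β a) (β b))
    ⦃a b : I⦄ (hab : a ≤ b) : r (α.trans β a) (α.trans β b) := by
  have hab' : (a : ℝ) ≤ b := hab
  rw [Path.trans_apply, Path.trans_apply]
  split_ifs with ha hb hb
  · exact hα (Subtype.mk_le_mk.mpr (by linarith))
  · have hαy := hα (le_one' (t := ⟨2 * (a : ℝ), by linarith [a.2.1], by linarith⟩))
    have hβy := hβ (nonneg' (t := ⟨2 * (b : ℝ) - 1, by linarith, by linarith [b.2.2]⟩))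
    rw [α.target] at hαy
    rw [β.source] at hβy
    exact _root_.trans_of r hαy hβy
  · exact absurd (hab'.trans hb) ha
  · exact hβ (Subtype.mk_le_mk.mpr (by linarith))

namespace DStruct

variable {X : Type*} [TopologicalSpace X] {D : DStruct X}

theorem le_trans {x y z : X} : D.le x y → D.le y z → D.le x z
  | ⟨α, hα⟩, ⟨β, hβ⟩ => ⟨α.trans β, D.trans α β hα hβ⟩

theorem le_apply_of_isDPath {x y : X} {γ : Path x y} (hγ : D.IsDPath γ) {a b : I}
    (hab : a ≤ b) : D.le (γ a) (γ b) := by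
  let f : C(I, I) := ⟨Set.Icc.convexComb a b, Set.Icc.continuous_convexComb a b⟩
  have hf : Monotone f := fun s t hst => by
    have hab' : (a : ℝ) ≤ b := hab
    have hst' : (s : ℝ) ≤ t := hst
    change (Set.Icc.convexComb a b s : ℝ) ≤ Set.Icc.convexComb a b t
    simp only [Set.Icc.coe_convexComb]
    nlinarith
  have h : D.le (γ (f 0)) (γ (f 1)) := ⟨_, D.reparam γ f hγ hf⟩
  simpa [f] using h

theorem NoLoops.le_antisymm (hD : D.NoLoops) {x y : X} : D.le x y → D.le y x → x = y
  | ⟨α, hα⟩, ⟨β, hβ⟩ => by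
    obtain ⟨t, ht⟩ : y ∈ Set.range (α.trans β) := Path.trans_range α β ▸ Or.inl ⟨1, α.target⟩
    exact (ht ▸ hD x (α.trans β) (D.trans α β hα hβ) t).symm

variable (D) in
def CylLE (p q : X × I) : Prop :=
  p.2 < q.2 ∨ p.2 = q.2 ∧ (p.2 = 0 ∨ p.2 = 1 ∨ D.le p.1 q.1)

variable (D) in
def SuspLE : Susp X → Susp X → Prop :=
  Quotient.lift₂ D.CylLE fun p q p' q' hp hq => by
    rcases hp with rfl | ⟨hp, hp'⟩ | ⟨hp, hp'⟩ <;> rcases hq with rfl | ⟨hq, hq'⟩ | ⟨hq, hq'⟩ <;>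
      simp_all only [CylLE] <;> grind

theorem CylLE.trans {p q r : X × I} : D.CylLE p q → D.CylLE q r → D.CylLE p r := by
  rintro (hpq | ⟨hpq, hp⟩) (hqr | ⟨hqr, hq⟩)
  · exact Or.inl (hpq.trans hqr)
  · exact Or.inl (hqr ▸ hpq)
  · exact Or.inl (hpq ▸ hqr)
  · refine Or.inr ⟨hpq.trans hqr, ?_⟩
    rcases hp with hp | hp | hxy
    · exact Or.inl hp
    · exact Or.inr (Or.inl hp)
    rcases hq with hq | hq | hyz
    · exact Or.inl (hpq ▸ hq)
    · exact Or.inr (Or.inl (hpq ▸ hq))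
    · exact Or.inr (Or.inr (le_trans hxy hyz))

theorem SuspLE.trans {p q r : Susp X} : D.SuspLE p q → D.SuspLE q r → D.SuspLE p r :=
  Quotient.inductionOn₃ p q r fun _ _ _ => CylLE.trans

instance : IsTrans (Susp X) D.SuspLE := ⟨fun _ _ _ => SuspLE.trans⟩

theorem NoLoops.suspLE_antisymm (hD : D.NoLoops) {p q : Susp X} :
    D.SuspLE p q → D.SuspLE q p → p = q := by
  induction p using Quotient.inductionOn with | h p => ?_
  induction q using Quotient.inductionOn with | h q => ?_
  rintro (hpq | ⟨hpq, hp⟩) (hqp | ⟨hqp, hq⟩)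
  · exact absurd (hpq.trans hqp) (lt_irrefl _)
  · exact absurd hpq hqp.symm.not_lt
  · exact absurd hqp hpq.symm.not_lt
  apply Quotient.sound
  rcases hp with hp | hp | hxy
  · exact Or.inr (Or.inl ⟨hp, hpq ▸ hp⟩)
  · exact Or.inr (Or.inr ⟨hp, hpq ▸ hp⟩)
  rcases hq with hq | hq | hyx
  · exact Or.inr (Or.inl ⟨hpq ▸ hq, hq⟩)
  · exact Or.inr (Or.inr ⟨hpq ▸ hq, hq⟩)
  · exact Or.inl (Prod.ext (hD.le_antisymm hxy hyx) hpq)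

end DStruct

open DStruct

theorem SuspD.suspLE_apply_of_le {X : Type*} [TopologicalSpace X] {D : DStruct X}
    {p q : Susp X} {γ : Path p q} (hγ : SuspD D γ) ⦃a b : I⦄ (hab : a ≤ b) :
    D.SuspLE (γ a) (γ b) := by
  induction hγ generalizing a b with
  | proj γ f hγ hf =>
    exact (hf hab).lt_or_eq.imp id fun h => ⟨h, Or.inr (Or.inr (le_apply_of_isDPath hγ hab))⟩
  | trans α β _ _ ihα ihβ => exact Path.rel_trans_apply_of_le ihα ihβ hab
  | reparam γ f _ hf ih => exact ih (hf hab)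

/-- The directed suspension of a d-space with no loops has no loops. -/
theorem susp_noLoops {X : Type*} [TopologicalSpace X] (DX : DStruct X)
    (hNL : DX.NoLoops) :
    ∀ (p : Susp X) (γ : Path p p), SuspD DX γ → ∀ t, γ t = p := by
  intro p γ hγ t
  have hstart : DX.SuspLE p (γ t) := by simpa using hγ.suspLE_apply_of_le (nonneg' (t := t))
  have hend : DX.SuspLE (γ t) p := by simpa using hγ.suspLE_apply_of_le (le_one' (t := t))
  exact hNL.suspLE_antisymm hend hstart
end

section
/- Let X be a topological space (viewed as the fiber of the directed suspension ΣX). The map J : X → P(ΣX)(𝟎, 𝟏) sending x to the path t ↦ [x, t] is a homotopy equivalence between X and the space of directed paths in ΣX from the bottom point 𝟎 to the top point 𝟏. -/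
/-- The bottom point `𝟎` of the directed suspension. -/
noncomputable def suspBot (X : Type*) [TopologicalSpace X] [Nonempty X] : Susp X :=
  Quotient.mk (suspSetoid X) (Classical.arbitrary X, 0)

/-- The top point `𝟏` of the directed suspension. -/
noncomputable def suspTop (X : Type*) [TopologicalSpace X] [Nonempty X] : Susp X :=
  Quotient.mk (suspSetoid X) (Classical.arbitrary X, 1)

/-- The space of directed paths in `ΣX` from `𝟎` to `𝟏`: paths represented by a pair of a
continuous map into `X` and a non-decreasing map into `[0,1]`. -/
def DirSuspPaths (X : Type*) [TopologicalSpace X] [Nonempty X] : Type _ :=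
  {γ : Path (suspBot X) (suspTop X) //
    ∃ (a : C(unitInterval, X)) (f : C(unitInterval, unitInterval)),
      Monotone ⇑f ∧ ∀ t, γ t = Quotient.mk (suspSetoid X) (a t, f t)}

noncomputable instance (X : Type*) [TopologicalSpace X] [Nonempty X] :
    TopologicalSpace (DirSuspPaths X) :=
  instTopologicalSpaceSubtype

/-!
The inverse `S` reads off the `X`-coordinate of a directed path `γ` at the time
`q γ = 1 - ∫₀¹ h`, where `h` is the height profile of `γ`. This time depends continuously on `γ`,
and as `h` is continuous and monotone from `0` to `1`, the height `h (q γ)` is strictly between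
the poles, where the `X`-coordinate is defined and continuous. Then `S ∘ J = id`, and a homotopy
from `J ∘ S` to the identity slides the sampling time from `q γ` to `t` and the height from `t` to
`h t`; stretching heights by a factor depending on `h (q γ)` keeps the endpoints at the poles.
-/

noncomputable section

open Set unitInterval

theorem Set.Icc.convexComb_le_convexComb {a b : ℝ} {x x' y y' : Icc a b} (hx : x ≤ x')
    (hy : y ≤ y') (t : I) : convexComb x y t ≤ convexComb x' y' t := by
  rw [← Subtype.coe_le_coe] at hx hy ⊢
  simp only [coe_convexComb]
  nlinarith [t.2.1, t.2.2]

namespace unitInterval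

def squash (k : ℝ) (u v : I) : I :=
  ⟨max (1 - max k 1 * (1 - u)) (min v (max k 1 * u)), by
    have hk : (1 : ℝ) ≤ max k 1 := le_max_right k 1
    constructor
    · exact le_max_of_le_right (le_min v.2.1 (by nlinarith [u.2.1]))
    · exact max_le (by nlinarith [u.2.2]) (min_le_of_left_le v.2.2)⟩

variable {k : ℝ} {u v : I}

theorem coe_squash (k : ℝ) (u v : I) :
    (squash k u v : ℝ) = max (1 - max k 1 * (1 - u)) (min v (max k 1 * u)) := rfl

@[fun_prop]
theorem _root_.Continuous.squash {Z : Type*} [TopologicalSpace Z] {k : Z → ℝ} {u v : Z → I}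
    (hk : Continuous k) (hu : Continuous u) (hv : Continuous v) :
    Continuous fun z => unitInterval.squash (k z) (u z) (v z) := by
  unfold unitInterval.squash; fun_prop

theorem squash_zero_left (k : ℝ) (v : I) : squash k 0 v = 0 := by
  ext; simp [coe_squash, v.2.1]

theorem squash_one_left (k : ℝ) (v : I) : squash k 1 v = 1 := by
  ext; simp [coe_squash, v.2.2]

theorem squash_self (k : ℝ) (u : I) : squash k u u = u := by
  have hk : (1 : ℝ) ≤ max k 1 := le_max_right k 1
  ext; simp only [coe_squash]
  rw [min_eq_left (by nlinarith [u.2.1]), max_eq_right (by nlinarith [u.2.2])]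

theorem squash_eq_right (h₀ : 1 ≤ k * u) (h₁ : 1 ≤ k * (1 - u)) : squash k u v = v := by
  have hk : k ≤ max k 1 := le_max_left k 1
  ext; simp only [coe_squash]
  rw [min_eq_left (by nlinarith [u.2.1, v.2.2]), max_eq_right (by nlinarith [u.2.2, v.2.1])]

theorem squash_zero_right (h : 1 ≤ k * (1 - u)) : squash k u 0 = 0 := by
  have hk : k ≤ max k 1 := le_max_left k 1
  ext; simp only [coe_squash, Icc.coe_zero]
  rw [min_eq_left (by nlinarith [u.2.1, le_max_right k 1]), max_eq_right (by nlinarith [u.2.2])]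

theorem squash_one_right (h : 1 ≤ k * u) : squash k u 1 = 1 := by
  have hk : k ≤ max k 1 := le_max_left k 1
  ext; simp only [coe_squash, Icc.coe_one]
  rw [min_eq_left (by nlinarith [u.2.1]), max_eq_right (by nlinarith [u.2.2, le_max_right k 1])]

theorem squash_le_squash {u' v' : I} (hu : u ≤ u') (hv : v ≤ v') :
    squash k u v ≤ squash k u' v' := by
  have hk : (0 : ℝ) ≤ max k 1 := zero_le_one.trans (le_max_right k 1)
  rw [← Subtype.coe_le_coe] at hu hv ⊢
  simp only [coe_squash]
  exact max_le_max (by nlinarith) (min_le_min hv (by nlinarith))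

end unitInterval

theorem Monotone.apply_one_sub_integral_mem_Ioo {g : ℝ → ℝ} (hc : Continuous g)
    (hm : Monotone g) (h0 : g 0 = 0) (h1 : g 1 = 1) :
    g (1 - ∫ t in (0:ℝ)..1, g t) ∈ Ioo 0 1 := by
  set m := ∫ t in (0:ℝ)..1, g t
  have hint : ∀ a b : ℝ, IntervalIntegrable g MeasureTheory.volume a b :=
    fun a b => hc.intervalIntegrable a b
  have hsplit (s : ℝ) : m = (∫ t in (0:ℝ)..s, g t) + ∫ t in s..1, g t :=
    (intervalIntegral.integral_add_adjacent_intervals (hint 0 s) (hint s 1)).symm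
  have hm0 : 0 ≤ m := intervalIntegral.integral_nonneg zero_le_one
    fun t ht => h0 ▸ hm ht.1
  have hm1 : m ≤ 1 := by
    simpa using intervalIntegral.integral_mono_on zero_le_one (hint 0 1)
      intervalIntegrable_const fun t ht => h1 ▸ hm ht.2
  refine ⟨lt_of_le_of_ne (h0 ▸ hm (by linarith)) fun hs => ?_,
    lt_of_le_of_ne (h1 ▸ hm (by linarith)) fun hs => ?_⟩
  · -- `g = 0` on `[0, 1 - m]` and `g < 1` near `1 - m` would give `m < m`
    have hs1 : 1 - m < 1 := lt_of_le_of_ne (by linarith) fun h => by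
      rw [h, h1] at hs; exact zero_ne_one hs
    have hleft : ∫ t in (0:ℝ)..(1 - m), g t = 0 := by
      rw [intervalIntegral.integral_congr (g := fun _ => 0), intervalIntegral.integral_zero]
      intro t ht
      rw [uIcc_of_le (by linarith)] at ht
      exact le_antisymm (hs ▸ hm ht.2) (h0 ▸ hm ht.1)
    have hright : ∫ t in (1 - m)..1, g t < ∫ t in (1 - m)..1, (1 : ℝ) :=
      intervalIntegral.integral_lt_integral_of_continuousOn_of_le_of_exists_lt hs1
        hc.continuousOn continuousOn_const (fun t ht => h1 ▸ hm ht.2)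
        ⟨1 - m, left_mem_Icc.2 hs1.le, by rw [← hs]; norm_num⟩
    simp only [intervalIntegral.integral_const, smul_eq_mul, mul_one] at hright
    linarith [hsplit (1 - m)]
  · -- `g = 1` on `[1 - m, 1]` and `g > 0` near `1 - m` would give `m > m`
    have hs0 : 0 < 1 - m := lt_of_le_of_ne (by linarith) fun h => by
      rw [← h, h0] at hs; exact zero_ne_one hs
    have hright : ∫ t in (1 - m)..1, g t = ∫ t in (1 - m)..1, (1 : ℝ) := by
      refine intervalIntegral.integral_congr fun t ht => ?_
      rw [uIcc_of_le (by linarith)] at ht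
      exact le_antisymm (h1 ▸ hm ht.2) (hs ▸ hm ht.1)
    have hleft : ∫ t in (0:ℝ)..(1 - m), (0 : ℝ) < ∫ t in (0:ℝ)..(1 - m), g t :=
      intervalIntegral.integral_lt_integral_of_continuousOn_of_le_of_exists_lt hs0
        continuousOn_const hc.continuousOn (fun t ht => h0 ▸ hm ht.1.le)
        ⟨1 - m, right_mem_Icc.2 hs0.le, by rw [hs]; norm_num⟩
    simp only [intervalIntegral.integral_const, smul_eq_mul, mul_one, mul_zero] at hleft hright
    linarith [hsplit (1 - m)]

namespace Susp

variable {X : Type*} [TopologicalSpace X]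

abbrev mk (p : X × I) : Susp X := Quotient.mk (suspSetoid X) p

theorem isQuotientMap_mk : Topology.IsQuotientMap (mk : X × I → Susp X) :=
  isQuotientMap_quotient_mk'

theorem mk_surjective : Function.Surjective (mk : X × I → Susp X) :=
  Quotient.mk_surjective

@[fun_prop]
theorem continuous_mk : Continuous (mk : X × I → Susp X) := isQuotientMap_mk.continuous

theorem mk_zero [Nonempty X] (x : X) : mk (x, 0) = suspBot X :=
  Quotient.sound (Or.inr (Or.inl ⟨rfl, rfl⟩))

theorem mk_one [Nonempty X] (x : X) : mk (x, 1) = suspTop X :=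
  Quotient.sound (Or.inr (Or.inr ⟨rfl, rfl⟩))

theorem eq_of_mk_eq_mk {p q : X × I} (h : mk p = mk q) (h0 : p.2 ≠ 0) (h1 : p.2 ≠ 1) :
    p = q := by
  rcases Quotient.exact h with h | ⟨h, -⟩ | ⟨h, -⟩
  exacts [h, absurd h h0, absurd h h1]

def height : Susp X → I :=
  Quotient.lift Prod.snd (by rintro p q (rfl | ⟨hp, hq⟩ | ⟨hp, hq⟩) <;> simp_all)

@[simp] theorem height_mk (p : X × I) : height (mk p) = p.2 := rfl

@[simp] theorem height_suspBot [Nonempty X] : height (suspBot X) = 0 := rfl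

@[simp] theorem height_suspTop [Nonempty X] : height (suspTop X) = 1 := rfl

@[fun_prop]
theorem continuous_height : Continuous (height : Susp X → I) :=
  continuous_quot_lift _ continuous_snd

theorem exists_eq_mk (z : Susp X) : ∃ x, z = mk (x, height z) := by
  obtain ⟨⟨x, u⟩, rfl⟩ := mk_surjective z
  exact ⟨x, rfl⟩

/-- The `X`-coordinate of a point of the suspension; an arbitrary point at the two poles. -/
def fst (z : Susp X) : X := (exists_eq_mk z).choose

theorem mk_fst_height (z : Susp X) : mk (fst z, height z) = z :=
  (exists_eq_mk z).choose_spec.symm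

theorem fst_mk {x : X} {u : I} (h0 : u ≠ 0) (h1 : u ≠ 1) : fst (mk (x, u)) = x :=
  congrArg Prod.fst (eq_of_mk_eq_mk (mk_fst_height (mk (x, u))) h0 h1)

/-- Bundling the parameters into a continuous map makes `reheight` jointly continuous, since
continuity out of the quotient `Susp X` only sees one variable. -/
def reheight : Susp X → C(ℝ × I, Susp X) :=
  Quotient.lift
    (ContinuousMap.curry ⟨fun p : (X × I) × (ℝ × I) => mk (p.1.1, squash p.2.1 p.1.2 p.2.2),
      by fun_prop⟩) (by
    rintro ⟨x, u⟩ ⟨y, w⟩ (h | ⟨hu, hw⟩ | ⟨hu, hw⟩) <;> ext kv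
    · rw [h]
    · simp only at hu hw; subst hu hw
      exact Quotient.sound (Or.inr (Or.inl ⟨squash_zero_left _ _, squash_zero_left _ _⟩))
    · simp only at hu hw; subst hu hw
      exact Quotient.sound (Or.inr (Or.inr ⟨squash_one_left _ _, squash_one_left _ _⟩)))

@[simp] theorem reheight_mk (p : X × I) (k : ℝ) (v : I) :
    reheight (mk p) (k, v) = mk (p.1, squash k p.2 v) := rfl

@[fun_prop]
theorem continuous_reheight : Continuous (reheight : Susp X → C(ℝ × I, Susp X)) :=
  isQuotientMap_mk.continuous_iff.2 (ContinuousMap.curry _).continuous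

theorem reheight_height (z : Susp X) (k : ℝ) : reheight z (k, height z) = z := by
  obtain ⟨⟨x, u⟩, rfl⟩ := mk_surjective z
  rw [height_mk, reheight_mk, squash_self]

theorem reheight_zero [Nonempty X] {z : Susp X} {k : ℝ} (h : 1 ≤ k * (1 - height z)) :
    reheight z (k, 0) = suspBot X := by
  obtain ⟨⟨x, u⟩, rfl⟩ := mk_surjective z
  rw [height_mk] at h
  rw [reheight_mk, squash_zero_right h, mk_zero]

theorem reheight_one [Nonempty X] {z : Susp X} {k : ℝ} (h : 1 ≤ k * height z) :
    reheight z (k, 1) = suspTop X := by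
  obtain ⟨⟨x, u⟩, rfl⟩ := mk_surjective z
  rw [height_mk] at h
  rw [reheight_mk, squash_one_right h, mk_one]

theorem reheight_eq_mk_fst {z : Susp X} {k : ℝ} (h₀ : 1 ≤ k * height z)
    (h₁ : 1 ≤ k * (1 - height z)) (v : I) : reheight z (k, v) = mk (fst z, v) := by
  conv_lhs => rw [← mk_fst_height z]
  rw [reheight_mk, squash_eq_right h₀ h₁]

theorem isInducing_mk_const {u : I} (h0 : 0 < u) (h1 : u < 1) :
    Topology.IsInducing fun x : X => mk (x, u) := by
  -- the band `U × (0, 1)` is saturated, so its image is open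
  have hsat (U : Set X) : mk ⁻¹' (mk '' (U ×ˢ Ioo (0 : I) 1)) = U ×ˢ Ioo (0 : I) 1 := by
    refine (subset_preimage_image _ _).antisymm' ?_
    rintro p ⟨q, hq, hqp⟩
    rwa [← eq_of_mk_eq_mk hqp hq.2.1.ne' hq.2.2.ne]
  refine ⟨le_antisymm (continuous_mk.comp (by fun_prop)).le_induced fun U hU => ?_⟩
  refine isOpen_induced_iff.2 ⟨mk '' (U ×ˢ Ioo (0 : I) 1), ?_, ?_⟩
  · rw [← isQuotientMap_mk.isOpen_preimage, hsat]
    exact hU.prod isOpen_Ioo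
  · ext x
    simp only [mem_preimage]
    rw [← mem_preimage (f := mk), hsat]
    simp [h0, h1]

end Susp

namespace DirSuspPaths

open Susp Set.Icc

variable {X : Type*} [TopologicalSpace X] [Nonempty X]

theorem continuous_of_continuous_uncurry {Y : Type*} [TopologicalSpace Y]
    {F : Y → DirSuspPaths X} (h : Continuous fun p : Y × I => (F p.1).1 p.2) : Continuous F :=
  (Path.continuous_uncurry_iff.1 h).subtype_mk _

theorem monotone_height (γ : DirSuspPaths X) : Monotone fun t => height (γ.1 t) := by
  obtain ⟨a, f, hf, hγ⟩ := γ.2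
  intro s t hst
  simpa only [hγ, height_mk] using hf hst

def meridian : C(X, DirSuspPaths X) where
  toFun x := ⟨⟨⟨fun t => mk (x, t), by fun_prop⟩, mk_zero x, mk_one x⟩,
    .const _ x, .id _, monotone_id, fun _ => rfl⟩
  continuous_toFun := continuous_of_continuous_uncurry continuous_mk

@[simp] theorem meridian_apply (x : X) (t : I) : (meridian x).1 t = mk (x, t) := rfl

/-- `1 - meanHeight γ` is a time at which `γ` is strictly between the poles, depending
continuously on `γ`. -/
def meanHeight (γ : DirSuspPaths X) : ℝ :=
  ∫ t in (0:ℝ)..1, IccExtend zero_le_one (fun t => (height (γ.1 t) : ℝ)) t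

def midTime (γ : DirSuspPaths X) : I := projIcc 0 1 zero_le_one (1 - meanHeight γ)

def midHeight (γ : DirSuspPaths X) : I := height (γ.1 (midTime γ))

theorem midHeight_mem_Ioo (γ : DirSuspPaths X) : midHeight γ ∈ Ioo 0 1 := by
  have hc : Continuous fun t => (height (γ.1 t) : ℝ) := by fun_prop
  have hm : Monotone fun t => (height (γ.1 t) : ℝ) :=
    fun s t hst => Subtype.coe_le_coe.2 (monotone_height γ hst)
  have := (hm.IccExtend zero_le_one).apply_one_sub_integral_mem_Ioo hc.Icc_extend' ?_ ?_
  · rwa [IccExtend_apply] at this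
  all_goals simp

@[fun_prop]
theorem continuous_meanHeight : Continuous (meanHeight : DirSuspPaths X → ℝ) :=
  intervalIntegral.continuous_parametric_intervalIntegral_of_continuous'
    (f := fun (γ : DirSuspPaths X) t => IccExtend zero_le_one (fun t => (height (γ.1 t) : ℝ)) t)
    (by simp only [IccExtend]; fun_prop) 0 1

@[fun_prop]
theorem continuous_midTime : Continuous (midTime : DirSuspPaths X → I) := by
  unfold midTime; fun_prop

@[fun_prop]
theorem continuous_midHeight : Continuous (midHeight : DirSuspPaths X → I) := by
  unfold midHeight; fun_prop

/-- The factor by which `reheight` stretches heights, chosen so that it pushes heights below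
`midHeight γ` to the bottom and heights above it to the top. -/
def slope (γ : DirSuspPaths X) : ℝ := ((midHeight γ : ℝ) * (1 - midHeight γ))⁻¹

@[fun_prop]
theorem continuous_slope : Continuous (slope : DirSuspPaths X → ℝ) := by
  have hne (γ : DirSuspPaths X) : (midHeight γ : ℝ) * (1 - midHeight γ) ≠ 0 := by
    obtain ⟨h0, h1⟩ : (0 : ℝ) < midHeight γ ∧ (midHeight γ : ℝ) < 1 := midHeight_mem_Ioo γ
    nlinarith
  exact Continuous.inv₀ (by fun_prop) hne

theorem one_le_slope_mul {γ : DirSuspPaths X} {u : I} (h : midHeight γ ≤ u) :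
    1 ≤ slope γ * u := by
  obtain ⟨h0, h1⟩ : (0 : ℝ) < midHeight γ ∧ (midHeight γ : ℝ) < 1 := midHeight_mem_Ioo γ
  calc 1 ≤ (1 - (midHeight γ : ℝ))⁻¹ := (one_le_inv₀ (by linarith)).2 (by linarith)
    _ = slope γ * midHeight γ := by simp only [slope]; field_simp
    _ ≤ slope γ * u := by gcongr; exact (inv_pos.2 (by nlinarith)).le

theorem one_le_slope_mul_one_sub {γ : DirSuspPaths X} {u : I} (h : u ≤ midHeight γ) :
    1 ≤ slope γ * (1 - u) := by
  obtain ⟨h0, h1⟩ : (0 : ℝ) < midHeight γ ∧ (midHeight γ : ℝ) < 1 := midHeight_mem_Ioo γ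
  have hu : (u : ℝ) ≤ midHeight γ := h
  calc 1 ≤ (midHeight γ : ℝ)⁻¹ := (one_le_inv₀ h0).2 h1.le
    _ = slope γ * (1 - midHeight γ) := by
      simp only [slope]; field_simp [(sub_pos.2 h1).ne']
    _ ≤ slope γ * (1 - u) := by gcongr; exact (inv_pos.2 (by nlinarith)).le

theorem reheight_midTime (γ : DirSuspPaths X) (v : I) :
    reheight (γ.1 (midTime γ)) (slope γ, v) = mk (fst (γ.1 (midTime γ)), v) :=
  reheight_eq_mk_fst (one_le_slope_mul le_rfl) (one_le_slope_mul_one_sub le_rfl) v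

def toFiber : C(DirSuspPaths X, X) where
  toFun γ := fst (γ.1 (midTime γ))
  continuous_toFun := by
    let half : I := ⟨1 / 2, by norm_num, by norm_num⟩
    have h0 : 0 < half := show (0 : ℝ) < 1 / 2 by norm_num
    have h1 : half < 1 := show (1 / 2 : ℝ) < 1 by norm_num
    rw [(isInducing_mk_const (X := X) h0 h1).continuous_iff]
    simp only [Function.comp_def, ← reheight_midTime]
    fun_prop

theorem toFiber_meridian (x : X) : toFiber (meridian x) = x := by
  have hq := midHeight_mem_Ioo (meridian x)
  simp only [midHeight, meridian_apply, height_mk] at hq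
  exact fst_mk hq.1.ne' hq.2.ne

/-- Reheighting by `slope γ` keeps the endpoints at the poles: at `t = 0` the sampled point of
`γ` lies below `midHeight γ`, at `t = 1` above it. -/
def deform (s : I) (γ : DirSuspPaths X) : DirSuspPaths X :=
  ⟨{ toFun t := reheight (γ.1 (convexComb (midTime γ) t s))
       (slope γ, convexComb t (height (γ.1 t)) s)
     continuous_toFun := by fun_prop
     source' := by
       have hw : convexComb (midTime γ) 0 s ≤ midTime γ :=
         (convexComb_le_convexComb le_rfl nonneg' s).trans_eq (convexComb_eq _ s)
       simp only [Path.source, height_suspBot, convexComb_eq]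
       exact reheight_zero (one_le_slope_mul_one_sub (monotone_height γ hw))
     target' := by
       have hw : midTime γ ≤ convexComb (midTime γ) 1 s :=
         (convexComb_eq _ s).symm.trans_le (convexComb_le_convexComb le_rfl le_one' s)
       simp only [Path.target, height_suspTop, convexComb_eq]
       exact reheight_one (one_le_slope_mul (monotone_height γ hw)) },
    by
      obtain ⟨a, f, hf, hγ⟩ := γ.2
      refine ⟨a.comp ⟨fun t => convexComb (midTime γ) t s, by fun_prop⟩,
        ⟨fun t => squash (slope γ) (f (convexComb (midTime γ) t s))
          (convexComb t (height (γ.1 t)) s), by fun_prop⟩, fun t t' htt' => ?_, fun t => ?_⟩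
      · exact squash_le_squash (hf (convexComb_le_convexComb le_rfl htt' s))
          (convexComb_le_convexComb htt' (monotone_height γ htt') s)
      · simp only [Path.coe_mk_mk, hγ, reheight_mk]
        rfl⟩

theorem deform_apply (s : I) (γ : DirSuspPaths X) (t : I) :
    (deform s γ).1 t =
      reheight (γ.1 (convexComb (midTime γ) t s)) (slope γ, convexComb t (height (γ.1 t)) s) :=
  rfl

theorem deform_zero (γ : DirSuspPaths X) : deform 0 γ = meridian (toFiber γ) :=
  Subtype.ext <| Path.ext <| funext fun t => by
    rw [deform_apply, convexComb_zero, convexComb_zero, reheight_midTime]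
    rfl

theorem deform_one (γ : DirSuspPaths X) : deform 1 γ = γ :=
  Subtype.ext <| Path.ext <| funext fun t => by
    rw [deform_apply, convexComb_one, convexComb_one, reheight_height]

def deformHomotopy :
    ContinuousMap.Homotopy (meridian.comp toFiber) (ContinuousMap.id (DirSuspPaths X)) where
  toFun p := deform p.1 p.2
  continuous_toFun := continuous_of_continuous_uncurry (by simp only [deform_apply]; fun_prop)
  map_zero_left := deform_zero
  map_one_left := deform_one

end DirSuspPaths

end

/-- The map `J : X → P(ΣX)(𝟎,𝟏)`, `x ↦ (t ↦ [x, t])`, is a homotopy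
equivalence. -/
theorem susp_pathSpace_homotopyEquiv (X : Type*) [TopologicalSpace X] [Nonempty X] :
    ∃ h : ContinuousMap.HomotopyEquiv X (DirSuspPaths X),
      ∀ (x : X) (t : unitInterval),
        (h.toFun x : DirSuspPaths X).val t =
          Quotient.mk (suspSetoid X) (x, t) := by
  have hleft : DirSuspPaths.toFiber.comp DirSuspPaths.meridian = ContinuousMap.id X :=
    ContinuousMap.ext DirSuspPaths.toFiber_meridian
  refine ⟨⟨DirSuspPaths.meridian, DirSuspPaths.toFiber, ?_, ⟨DirSuspPaths.deformHomotopy⟩⟩,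
    fun x t => rfl⟩
  exact hleft ▸ ContinuousMap.Homotopic.refl _
end
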